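/- If L ∈ GL(d,ℤ) is irreducible or, more generally, weakly irreducible, then the (2d)×(2d) block matrices [[L, 0],[0, L]] and [[L, I],[0, L]] (where I is the d×d identity) are weakly irreducible. -/

import Mathlib

open scoped Classical NNReal

noncomputable section

/-- An integer matrix as a complex matrix. -/
def matC {n : Type*} [Fintype n] [DecidableEq n] (L : Matrix n n ℤ) : Matrix n n ℂ :=
  L.map (Int.cast : ℤ → ℂ)

/-- `Ê(ρ)`: the sum (inside `ℂ^n`) of the generalized eigenspaces of `L` corresponding to the
eigenvalues of modulus different from `ρ`. -/
def hatE {n : Type*} [Fintype n] [DecidableEq n] (L : Matrix n n ℤ) (ρ : ℝ) :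
    Submodule ℂ (n → ℂ) :=
  ⨆ (μ : ℂ) (_ : ‖μ‖ ≠ ρ),
    Module.End.maxGenEigenspace (Matrix.toLin' (matC L)) μ

/-- `L` is weakly irreducible if, for each modulus `ρ` of an eigenvalue of `L`, the subspace
`Ê(ρ)` contains no nonzero integer vector. -/
def WeaklyIrreducible {n : Type*} [Fintype n] [DecidableEq n] (L : Matrix n n ℤ) : Prop :=
  ∀ ρ : ℝ, (∃ μ : ℂ, ‖μ‖ = ρ ∧ (matC L).charpoly.IsRoot μ) →
    ∀ m : n → ℤ, (fun i => (m i : ℂ)) ∈ hatE L ρ → m = 0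

namespace Statement13Aux

variable {d : ℕ}


lemma inr_comp (L B : Matrix (Fin d) (Fin d) ℤ) (μ : ℂ) (v : Fin d ⊕ Fin d → ℂ) :
    ((Matrix.toLin' (matC (Matrix.fromBlocks L B 0 L)) - μ • 1) v) ∘ Sum.inr
      = (Matrix.toLin' (matC L) - μ • 1) (v ∘ Sum.inr) := by
  funext i
  simp [matC, Matrix.fromBlocks_map, Matrix.toLin'_apply, Matrix.fromBlocks_mulVec]

lemma inl_comp (L B : Matrix (Fin d) (Fin d) ℤ) (μ : ℂ) (v : Fin d ⊕ Fin d → ℂ) :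
    ((Matrix.toLin' (matC (Matrix.fromBlocks L B 0 L)) - μ • 1) v) ∘ Sum.inl
      = (Matrix.toLin' (matC L) - μ • 1) (v ∘ Sum.inl)
        + Matrix.toLin' (matC B) (v ∘ Sum.inr) := by
  funext i
  simp [matC, Matrix.fromBlocks_map, Matrix.toLin'_apply, Matrix.fromBlocks_mulVec]
  ring

lemma inr_pow (L B : Matrix (Fin d) (Fin d) ℤ) (μ : ℂ) (k : ℕ) (v : Fin d ⊕ Fin d → ℂ) :
    (((Matrix.toLin' (matC (Matrix.fromBlocks L B 0 L)) - μ • 1) ^ k) v) ∘ Sum.inr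
      = ((Matrix.toLin' (matC L) - μ • 1) ^ k) (v ∘ Sum.inr) := by
  induction k generalizing v with
  | zero => simp
  | succ k ih =>
      rw [pow_succ', Module.End.mul_apply, inr_comp, ih, ← Module.End.mul_apply, ← pow_succ']

/-- membership helper: closure of maxGen under preimage by (f - μ) -/
lemma mem_maxGen_of_apply (fL : Module.End ℂ (Fin d → ℂ)) (μ : ℂ) (u : Fin d → ℂ)
    (h : (fL - μ • 1) u ∈ Module.End.maxGenEigenspace fL μ) : u ∈ Module.End.maxGenEigenspace fL μ := by
  rw [Module.End.mem_maxGenEigenspace] at h ⊢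
  obtain ⟨k, hk⟩ := h
  exact ⟨k + 1, by rwa [pow_succ, Module.End.mul_apply]⟩

lemma key_block (L B : Matrix (Fin d) (Fin d) ℤ)
    (hB : ∀ (μ : ℂ) (u : Fin d → ℂ),
      u ∈ Module.End.maxGenEigenspace (Matrix.toLin' (matC L)) μ →
      Matrix.toLin' (matC B) u ∈ Module.End.maxGenEigenspace (Matrix.toLin' (matC L)) μ)
    (μ : ℂ) (v : Fin d ⊕ Fin d → ℂ)
    (hv : v ∈ Module.End.maxGenEigenspace (Matrix.toLin' (matC (Matrix.fromBlocks L B 0 L))) μ) :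
    v ∘ Sum.inl ∈ Module.End.maxGenEigenspace (Matrix.toLin' (matC L)) μ ∧
    v ∘ Sum.inr ∈ Module.End.maxGenEigenspace (Matrix.toLin' (matC L)) μ := by
  rw [Module.End.mem_maxGenEigenspace] at hv
  obtain ⟨k, hk⟩ := hv
  induction k generalizing v with
  | zero =>
      simp only [pow_zero, Module.End.one_apply] at hk
      subst hk
      constructor <;> exact Submodule.zero_mem _
  | succ k ih =>
      have hr : v ∘ Sum.inr ∈ Module.End.maxGenEigenspace (Matrix.toLin' (matC L)) μ := by
        rw [Module.End.mem_maxGenEigenspace]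
        exact ⟨k + 1, by rw [← inr_pow L B, hk]; rfl⟩
      refine ⟨?_, hr⟩
      have hk' : ((Matrix.toLin' (matC (Matrix.fromBlocks L B 0 L)) - μ • 1) ^ k)
          ((Matrix.toLin' (matC (Matrix.fromBlocks L B 0 L)) - μ • 1) v) = 0 := by
        rwa [← Module.End.mul_apply, ← pow_succ]
      obtain ⟨hl', _⟩ := ih _ hk'
      rw [inl_comp] at hl'
      have h3 : (Matrix.toLin' (matC L) - μ • 1) (v ∘ Sum.inl)
          ∈ Module.End.maxGenEigenspace (Matrix.toLin' (matC L)) μ := by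
        have hBv := hB μ _ hr
        have := Submodule.sub_mem _ hl' hBv
        simpa using this
      exact mem_maxGen_of_apply _ _ _ h3

lemma hatE_block_le (L B : Matrix (Fin d) (Fin d) ℤ)
    (hB : ∀ (μ : ℂ) (u : Fin d → ℂ),
      u ∈ Module.End.maxGenEigenspace (Matrix.toLin' (matC L)) μ →
      Matrix.toLin' (matC B) u ∈ Module.End.maxGenEigenspace (Matrix.toLin' (matC L)) μ)
    (ρ : ℝ) (v : Fin d ⊕ Fin d → ℂ) (hv : v ∈ hatE (Matrix.fromBlocks L B 0 L) ρ) :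
    v ∘ Sum.inl ∈ hatE L ρ ∧ v ∘ Sum.inr ∈ hatE L ρ := by
  have hle : hatE (Matrix.fromBlocks L B 0 L) ρ ≤
      (hatE L ρ).comap (LinearMap.funLeft ℂ ℂ (Sum.inl : Fin d → Fin d ⊕ Fin d)) ⊓
      (hatE L ρ).comap (LinearMap.funLeft ℂ ℂ (Sum.inr : Fin d → Fin d ⊕ Fin d)) := by
    refine iSup₂_le fun μ hμ => ?_
    intro w hw
    obtain ⟨h1, h2⟩ := key_block L B hB μ w hw
    constructor
    · exact (le_iSup₂ (f := fun (μ : ℂ) (_ : ‖μ‖ ≠ ρ) =>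
        Module.End.maxGenEigenspace (Matrix.toLin' (matC L)) μ) μ hμ) h1
    · exact (le_iSup₂ (f := fun (μ : ℂ) (_ : ‖μ‖ ≠ ρ) =>
        Module.End.maxGenEigenspace (Matrix.toLin' (matC L)) μ) μ hμ) h2
  exact hle hv

lemma charpoly_block (L B : Matrix (Fin d) (Fin d) ℤ) :
    (matC (Matrix.fromBlocks L B 0 L)).charpoly = (matC L).charpoly ^ 2 := by
  have : matC (Matrix.fromBlocks L B 0 L)
      = Matrix.fromBlocks (matC L) (matC B) 0 (matC L) := by
    simp [matC, Matrix.fromBlocks_map]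
  rw [this, Matrix.charpoly_fromBlocks_zero₂₁, sq]

lemma wi_block (L B : Matrix (Fin d) (Fin d) ℤ)
    (hB : ∀ (μ : ℂ) (u : Fin d → ℂ),
      u ∈ Module.End.maxGenEigenspace (Matrix.toLin' (matC L)) μ →
      Matrix.toLin' (matC B) u ∈ Module.End.maxGenEigenspace (Matrix.toLin' (matC L)) μ)
    (hW : WeaklyIrreducible L) : WeaklyIrreducible (Matrix.fromBlocks L B 0 L) := by
  intro ρ hρ m hm
  obtain ⟨μ₀, hμ₀, hroot⟩ := hρ
  have hroot' : (matC L).charpoly.IsRoot μ₀ := by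
    rw [charpoly_block] at hroot
    simpa [Polynomial.IsRoot, sq, mul_eq_zero] using hroot
  obtain ⟨h1, h2⟩ := hatE_block_le L B hB ρ _ hm
  have e1 := hW ρ ⟨μ₀, hμ₀, hroot'⟩ (fun i => m (Sum.inl i)) h1
  have e2 := hW ρ ⟨μ₀, hμ₀, hroot'⟩ (fun i => m (Sum.inr i)) h2
  funext i
  cases i with
  | inl j => exact congrFun e1 j
  | inr j => exact congrFun e2 j


lemma exists_eigvec (L : Matrix (Fin d) (Fin d) ℤ) {μ : ℂ}
    (h : (matC L).charpoly.IsRoot μ) :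
    ∃ v : Fin d → ℂ, v ≠ 0 ∧
      v ∈ Module.End.maxGenEigenspace (Matrix.toLin' (matC L)) μ := by
  have hdet : ((Matrix.diagonal fun _ => μ) - matC L).det = 0 := by
    rw [Polynomial.IsRoot, Matrix.charpoly, _root_.eval_det, Matrix.matPolyEquiv_charmatrix] at h
    simpa using h
  obtain ⟨v, hv, hv0⟩ := (Matrix.exists_mulVec_eq_zero_iff).2 hdet
  refine ⟨v, hv, ?_⟩
  rw [Module.End.mem_maxGenEigenspace]
  refine ⟨1, ?_⟩
  rw [Matrix.sub_mulVec, sub_eq_zero] at hv0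
  funext i
  have h2 := congrFun hv0 i
  simp only [Matrix.mulVec_diagonal] at h2
  simp [Matrix.toLin'_apply, ← h2]

lemma hInv (L : Matrix (Fin d) (Fin d) ℤ) (ρ : ℝ) (w : Fin d → ℂ) (hw : w ∈ hatE L ρ) :
    Matrix.toLin' (matC L) w ∈ hatE L ρ := by
  have hle : hatE L ρ ≤ (hatE L ρ).comap (Matrix.toLin' (matC L)) := by
    refine iSup₂_le fun μ hμ x hx => ?_
    have hx2 := Module.End.mapsTo_maxGenEigenspace_of_comm
      (Commute.refl (Matrix.toLin' (matC L))) μ hx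
    exact (le_iSup₂ (f := fun (μ : ℂ) (_ : ‖μ‖ ≠ ρ) =>
      Module.End.maxGenEigenspace (Matrix.toLin' (matC L)) μ) μ hμ) hx2
  exact hle hw

lemma hatE_ne_top (L : Matrix (Fin d) (Fin d) ℤ) {ρ : ℝ} {μ₀ : ℂ}
    (hμ₀ : ‖μ₀‖ = ρ) (hroot : (matC L).charpoly.IsRoot μ₀) :
    hatE L ρ ≠ ⊤ := by
  obtain ⟨v, hv, hvm⟩ := exists_eigvec L hroot
  intro htop
  have hv1 : v ∈ hatE L ρ := htop ▸ Submodule.mem_top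
  have hle : hatE L ρ ≤ ⨆ (μ : ℂ) (_ : μ ≠ μ₀),
      Module.End.maxGenEigenspace (Matrix.toLin' (matC L)) μ := by
    refine iSup₂_le fun μ hμ => ?_
    have hne : μ ≠ μ₀ := fun h => hμ (h ▸ hμ₀)
    exact le_iSup₂_of_le μ hne le_rfl
  have hdisj := (Module.End.independent_maxGenEigenspace (Matrix.toLin' (matC L))) μ₀
  exact hv (Submodule.disjoint_def.mp hdisj v hvm (hle hv1))

lemma cast_mulVec (L : Matrix (Fin d) (Fin d) ℤ) (u : Fin d → ℚ) :
    ((Algebra.linearMap ℚ ℂ).compLeft (Fin d)) ((L.map (Int.cast : ℤ → ℚ)).mulVec u)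
      = (matC L).mulVec (((Algebra.linearMap ℚ ℂ).compLeft (Fin d)) u) := by
  funext i
  simp only [LinearMap.compLeft_apply, Function.comp_apply, Matrix.mulVec, dotProduct,
    matC, Matrix.map_apply, Algebra.linearMap_apply]
  push_cast
  rfl

lemma irreducible_wi (L : Matrix (Fin d) (Fin d) ℤ)
    (hp : Irreducible ((L.map (Int.cast : ℤ → ℚ)).charpoly)) : WeaklyIrreducible L := by
  intro ρ hρ m hm
  by_contra hm0
  obtain ⟨μ₀, hμ₀, hroot⟩ := hρ
  set A : Matrix (Fin d) (Fin d) ℚ := L.map (Int.cast : ℤ → ℚ) with hA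
  set p : Polynomial ℚ := A.charpoly with hpdef
  set fQ : Module.End ℚ (Fin d → ℚ) := Matrix.toLin' A with hfQ
  set cst : (Fin d → ℚ) →ₗ[ℚ] (Fin d → ℂ) := (Algebra.linearMap ℚ ℂ).compLeft (Fin d) with hcst
  set mQ : Fin d → ℚ := fun i => (m i : ℚ) with hmQdef
  have hmQ : mQ ≠ 0 := by
    intro h
    apply hm0
    funext i
    have := congrFun h i
    simpa [hmQdef] using this
  set U : Submodule ℚ (Fin d → ℚ) := ((hatE L ρ).restrictScalars ℚ).comap cst with hU
  have hcstmQ : cst mQ = fun i => (m i : ℂ) := by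
    funext i
    simp [hcst, hmQdef]
  have hmQU : mQ ∈ U := by
    simp only [hU, Submodule.mem_comap, Submodule.restrictScalars_mem, hcstmQ]
    exact hm
  have hUinv : ∀ u ∈ U, fQ u ∈ U := by
    intro u hu
    simp only [hU, Submodule.mem_comap, Submodule.restrictScalars_mem] at hu ⊢
    have : cst (fQ u) = Matrix.toLin' (matC L) (cst u) := by
      simp only [hfQ, Matrix.toLin'_apply]
      exact cast_mulVec L u
    rw [this]
    exact hInv L ρ _ hu
  have hUne : U ≠ ⊤ := by
    intro htop
    apply hatE_ne_top L hμ₀ hroot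
    rw [eq_top_iff, ← (Pi.basisFun ℂ (Fin d)).span_eq, Submodule.span_le]
    rintro _ ⟨i, rfl⟩
    have h1 : (Pi.single i 1 : Fin d → ℚ) ∈ U := htop ▸ Submodule.mem_top
    simp only [hU, Submodule.mem_comap, Submodule.restrictScalars_mem] at h1
    have h2 : cst (Pi.single i 1 : Fin d → ℚ) = Pi.basisFun ℂ (Fin d) i := by
      funext j
      rcases eq_or_ne j i with rfl | hji
      · simp [hcst]
      · simp [hcst, Pi.single_apply, hji]
    rwa [h2] at h1
  have hmem : ∀ n : ℕ, (fQ ^ n) mQ ∈ U := by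
    intro n
    induction n with
    | zero => simpa using hmQU
    | succ n ih =>
        rw [pow_succ', Module.End.mul_apply]
        exact hUinv _ ih
  have hCH : Polynomial.aeval fQ p = 0 := by
    have h1 : fQ = Matrix.toLinAlgEquiv' A := rfl
    rw [h1, Polynomial.aeval_algHom_apply
      (Matrix.toLinAlgEquiv' : Matrix (Fin d) (Fin d) ℚ ≃ₐ[ℚ] _) A p,
      Matrix.aeval_self_charpoly]
    simp
  have hli : LinearIndependent ℚ (fun i : Fin d => (fQ ^ (i : ℕ)) mQ) := by
    rw [Fintype.linearIndependent_iff]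
    intro c hc i
    set q : Polynomial ℚ := ∑ i : Fin d, Polynomial.C (c i) * Polynomial.X ^ (i : ℕ) with hqdef
    have hq : (Polynomial.aeval fQ q) mQ = 0 := by
      rw [hqdef, map_sum, LinearMap.sum_apply]
      rw [← hc]
      refine Finset.sum_congr rfl fun j _ => ?_
      simp [map_mul, Polynomial.aeval_C, Polynomial.aeval_X_pow, Module.End.mul_apply,
        Module.algebraMap_end_apply]
    have hq0 : q = 0 := by
      by_contra hq0
      have hdeg : q.degree < p.degree := by
        have h1 : q ∈ Polynomial.degreeLT ℚ d := by
          refine Submodule.sum_mem _ fun j _ => ?_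
          rw [Polynomial.mem_degreeLT]
          refine lt_of_le_of_lt (Polynomial.degree_C_mul_X_pow_le _ _) ?_
          exact_mod_cast Nat.cast_lt.mpr j.isLt
        rw [Polynomial.mem_degreeLT] at h1
        rw [hpdef, Matrix.charpoly_degree_eq_dim]
        simpa using h1
      have hdvd : ¬ p ∣ q := fun hdvd =>
        hq0 (Polynomial.eq_zero_of_dvd_of_degree_lt hdvd hdeg)
      obtain ⟨a, b, hab⟩ := hp.coprime_iff_not_dvd.2 hdvd
      have h1 := congrArg (fun g => (Polynomial.aeval fQ g) mQ) hab
      simp only [map_add, map_mul, map_one, LinearMap.add_apply, Module.End.mul_apply,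
        Module.End.one_apply, hq, hCH, map_zero, LinearMap.zero_apply, add_zero] at h1
      exact hmQ h1.symm
    have hcoeff := congrArg (fun r => Polynomial.coeff r (i : ℕ)) hq0
    simp only [hqdef, Polynomial.finset_sum_coeff, Polynomial.coeff_C_mul,
      Polynomial.coeff_X_pow, Polynomial.coeff_zero, mul_ite, mul_one, mul_zero] at hcoeff
    simpa [Fin.val_eq_val] using hcoeff
  have hspan : Submodule.span ℚ (Set.range fun i : Fin d => (fQ ^ (i : ℕ)) mQ) = ⊤ := by
    apply Submodule.eq_top_of_finrank_eq
    rw [finrank_span_eq_card hli, Fintype.card_fin, Module.finrank_fin_fun]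
  have : U = ⊤ := by
    rw [eq_top_iff, ← hspan, Submodule.span_le]
    rintro _ ⟨i, rfl⟩
    exact hmem _
  exact hUne this

end Statement13Aux

open Statement13Aux in
/-- If `L ∈ GL(d,ℤ)` is irreducible or, more generally, weakly irreducible,
then the `2d × 2d` block matrices `[[L, 0], [0, L]]` and `[[L, I], [0, L]]` are weakly
irreducible. -/
theorem statement13 {d : ℕ} (L : Matrix (Fin d) (Fin d) ℤ) (hL : IsUnit L.det)
    (h : Irreducible ((L.map (Int.cast : ℤ → ℚ)).charpoly) ∨ WeaklyIrreducible L) :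
    WeaklyIrreducible (Matrix.fromBlocks L 0 0 L) ∧
    WeaklyIrreducible (Matrix.fromBlocks L 1 0 L) := by
  have hW : WeaklyIrreducible L := h.elim (irreducible_wi L) id
  constructor
  · refine wi_block L 0 ?_ hW
    intro μ u hu
    have h0 : matC (0 : Matrix (Fin d) (Fin d) ℤ) = 0 := by
      ext i j; simp [matC]
    rw [h0]
    simp only [map_zero]
    exact Submodule.zero_mem _
  · refine wi_block L 1 ?_ hW
    intro μ u hu
    have h1 : matC (1 : Matrix (Fin d) (Fin d) ℤ) = 1 := by
      ext i j; simp [matC, Matrix.one_apply, apply_ite]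
    rw [h1, Matrix.toLin'_one]
    exact hu

end
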